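/- Let F, G : (Fin 3 → ℝ) → (Fin 3 → ℝ) be vector fields differentiable at a point x : Fin 3 → ℝ, and let n : Fin 3 → ℝ. Suppose F(y) = G(y) for every y with ∑ᵢ (yᵢ − xᵢ)·nᵢ = 0 (i.e., the fields agree on the affine plane through x with normal n). Then the normal component of the jump of the curl vanishes: ∑ᵢ ((curl F x)ᵢ − (curl G x)ᵢ)·nᵢ = 0. -/

import Mathlib

/-! The difference `D` of the derivatives of `F` and `G` at `x` vanishes on the plane `n⊥`,
so `‖n‖² D v = ⟨v, n⟩ D n`: up to the factor `‖n‖²`, `D` is the rank-one map `v ↦ ⟨v, n⟩ a`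
with `a = D n`. The curl of such a map is `n × a`, which is orthogonal to `n`. -/

/-- Partial derivative of `f` at `x` in the `j`-th coordinate direction. -/
noncomputable def pderiv3 (f : (Fin 3 → ℝ) → ℝ) (j : Fin 3) (x : Fin 3 → ℝ) : ℝ :=
  fderiv ℝ f x (Pi.single j 1)

/-- The curl of a vector field `F : ℝ³ → ℝ³` at a point `x`. -/
noncomputable def curl3 (F : (Fin 3 → ℝ) → (Fin 3 → ℝ)) (x : Fin 3 → ℝ) : Fin 3 → ℝ :=
  ![pderiv3 (fun y => F y 2) 1 x - pderiv3 (fun y => F y 1) 2 x,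
    pderiv3 (fun y => F y 0) 2 x - pderiv3 (fun y => F y 2) 0 x,
    pderiv3 (fun y => F y 1) 0 x - pderiv3 (fun y => F y 0) 1 x]

open Matrix

theorem fderiv_apply_eq_of_eq_on_line {𝕜 E F : Type*} [NontriviallyNormedField 𝕜]
    [NormedAddCommGroup E] [NormedSpace 𝕜 E] [NormedAddCommGroup F] [NormedSpace 𝕜 F]
    {f g : E → F} {x v : E} (hf : DifferentiableAt 𝕜 f x) (hg : DifferentiableAt 𝕜 g x)
    (h : ∀ t : 𝕜, f (x + t • v) = g (x + t • v)) :
    fderiv 𝕜 f x v = fderiv 𝕜 g x v := by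
  rw [← hf.lineDeriv_eq_fderiv, ← hg.lineDeriv_eq_fderiv, lineDeriv, lineDeriv, funext h]

theorem dotProduct_self_smul_apply_of_forall_dotProduct_eq_zero {ι R M : Type*} [Fintype ι]
    [CommRing R] [AddCommGroup M] [Module R M] {L : (ι → R) →ₗ[R] M} {n : ι → R}
    (hL : ∀ v, v ⬝ᵥ n = 0 → L v = 0) (v : ι → R) :
    (n ⬝ᵥ n) • L v = (v ⬝ᵥ n) • L n := by
  have hw : ((n ⬝ᵥ n) • v - (v ⬝ᵥ n) • n) ⬝ᵥ n = 0 := by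
    simp only [sub_dotProduct, smul_dotProduct, smul_eq_mul]
    ring
  simpa [sub_eq_zero] using hL _ hw

def linearCurl (R : Type*) [CommRing R] :
    ((Fin 3 → R) →ₗ[R] (Fin 3 → R)) →ₗ[R] (Fin 3 → R) where
  toFun L := ![L (Pi.single 1 1) 2 - L (Pi.single 2 1) 1,
    L (Pi.single 2 1) 0 - L (Pi.single 0 1) 2,
    L (Pi.single 0 1) 1 - L (Pi.single 1 1) 0]
  map_add' L M := by
    ext i; fin_cases i <;> simp <;> ring
  map_smul' c L := by
    ext i; fin_cases i <;> simp <;> ring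

theorem linearCurl_of_forall_eq_dotProduct_smul {R : Type*} [CommRing R]
    {L : (Fin 3 → R) →ₗ[R] (Fin 3 → R)} {n a : Fin 3 → R} (hL : ∀ v, L v = (v ⬝ᵥ n) • a) :
    linearCurl R L = n ⨯₃ a := by
  ext i; fin_cases i <;> simp [linearCurl, hL, cross_apply, mul_comm]

theorem curl3_eq_linearCurl_fderiv {F : (Fin 3 → ℝ) → (Fin 3 → ℝ)} {x : Fin 3 → ℝ}
    (hF : DifferentiableAt ℝ F x) : curl3 F x = linearCurl ℝ (fderiv ℝ F x) := by
  ext i; fin_cases i <;> simp [curl3, pderiv3, linearCurl, fderiv_apply hF]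

/-- If two vector fields agree on the affine plane through `x` with normal `n`, then
the normal component of the jump of their curls vanishes. -/
theorem curl_jump_normal_component_eq_zero
    (F G : (Fin 3 → ℝ) → (Fin 3 → ℝ)) (x n : Fin 3 → ℝ)
    (hF : DifferentiableAt ℝ F x) (hG : DifferentiableAt ℝ G x)
    (h : ∀ y : Fin 3 → ℝ, ∑ i, (y i - x i) * n i = 0 → F y = G y) :
    ∑ i, (curl3 F x i - curl3 G x i) * n i = 0 := by
  set D : (Fin 3 → ℝ) →ₗ[ℝ] (Fin 3 → ℝ) := fderiv ℝ F x - fderiv ℝ G x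
  have hD : ∀ v, v ⬝ᵥ n = 0 → D v = 0 := fun v hv => by
    refine sub_eq_zero.2 (fderiv_apply_eq_of_eq_on_line hF hG fun t => h _ ?_)
    have htv : (t • v) ⬝ᵥ n = 0 := by rw [smul_dotProduct, hv, smul_zero]
    simpa [dotProduct] using htv
  have hjump : curl3 F x - curl3 G x = linearCurl ℝ D := by
    rw [curl3_eq_linearCurl_fderiv hF, curl3_eq_linearCurl_fderiv hG, ← map_sub]
  have hrankOne : (n ⬝ᵥ n) • linearCurl ℝ D = n ⨯₃ D n := by
    rw [← map_smul]
    exact linearCurl_of_forall_eq_dotProduct_smul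
      (dotProduct_self_smul_apply_of_forall_dotProduct_eq_zero hD)
  change (curl3 F x - curl3 G x) ⬝ᵥ n = 0
  rcases eq_or_ne n 0 with rfl | hn
  · exact dotProduct_zero _
  · have hnn : n ⬝ᵥ n ≠ 0 := dotProduct_self_eq_zero.not.2 hn
    rw [hjump, ← smul_right_inj hnn, smul_zero, ← smul_dotProduct, hrankOne, dotProduct_comm,
      dot_self_cross]
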